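/- arXiv:2505.09954 — 6 statements merged into one kernel-verified Lean document; each statement's English description precedes it below -/
import Mathlib

section
/- For the map T(u,v) = (u(2-u) - uʰv/(1+cuʰ), γuʰv/(1+cuʰ) + (1-r)v) with parameters r, c > 0, γ ∈ ℝ, and h ∈ {1,2}, a fixed point (ū, v̄) with ū > 0 and v̄ > 0 exists if and only if γ > r(1+c), in which case it is unique and given by ūʰ = r/(γ - rc) and v̄ = (1-ū)(1+cūʰ)/ūʰ⁻¹. -/
private lemma pz_unique (r c γ : ℝ) (h : ℕ) (hr : 0 < r) (hc : 0 < c) (hh : h = 1 ∨ h = 2)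
    (u v : ℝ) (hu : 0 < u) (hv : 0 < v)
    (e1 : u * (2 - u) - u ^ h * v / (1 + c * u ^ h) = u)
    (e2 : γ * u ^ h * v / (1 + c * u ^ h) + (1 - r) * v = v) :
    γ > r * (1 + c) ∧ u ^ h = r / (γ - r * c) ∧
      v = (1 - u) * (1 + c * u ^ h) / u ^ (h - 1) := by
  have hup : 0 < u ^ h := pow_pos hu h
  have hden : 0 < 1 + c * u ^ h := by positivity
  have h2 : γ * u ^ h = r * (1 + c * u ^ h) := by
    have h2' : γ * u ^ h * v = r * (1 + c * u ^ h) * v := by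
      field_simp at e2; nlinarith [e2]
    exact mul_right_cancel₀ hv.ne' h2'
  have hg : 0 < γ - r * c := by nlinarith
  have hus : u ^ h = r / (γ - r * c) := by
    field_simp; nlinarith
  have h1 : v * u ^ h = (1 - u) * (1 + c * u ^ h) * u := by
    field_simp at e1; nlinarith [e1]
  have hu1 : u < 1 := by nlinarith [mul_pos hv hup, mul_pos hden hu]
  have huh1 : u ^ h < 1 := pow_lt_one₀ hu.le hu1 (by omega)
  have hgam : γ > r * (1 + c) := by
    rw [hus, div_lt_one hg] at huh1; nlinarith
  refine ⟨hgam, hus, ?_⟩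
  rcases hh with rfl | rfl
  · simp only [pow_one] at *
    field_simp
    simp only [Nat.sub_self, pow_zero, mul_one]
    exact mul_right_cancel₀ hu.ne' (by rw [h1]; ring)
  · simp only [show (2:ℕ)-1 = 1 by rfl, pow_one, pow_two] at *
    field_simp
    nlinarith [h1]

private lemma pz_exists (r c γ : ℝ) (h : ℕ) (hr : 0 < r) (hc : 0 < c) (hh : h = 1 ∨ h = 2)
    (hγ : γ > r * (1 + c)) :
    ∃ u v : ℝ, 0 < u ∧ 0 < v ∧
        u * (2 - u) - u ^ h * v / (1 + c * u ^ h) = u ∧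
        γ * u ^ h * v / (1 + c * u ^ h) + (1 - r) * v = v := by
  have hg : 0 < γ - r * c := by nlinarith
  have hlt : r / (γ - r * c) < 1 := by rw [div_lt_one hg]; nlinarith
  have hpos : 0 < r / (γ - r * c) := by positivity
  rcases hh with rfl | rfl
  · set u := r / (γ - r * c) with hu
    have hu1 : u < 1 := hlt
    have hup : 0 < u := hpos
    have hvp : 0 < (1 - u) * (1 + c * u) := by
      have : 0 < 1 + c * u := by positivity
      nlinarith
    refine ⟨u, (1 - u) * (1 + c * u), hup, hvp, ?_, ?_⟩
    · have hden : (1 + c * u) ≠ 0 := by positivity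
      field_simp
      ring
    · have hden : (1 + c * u) ≠ 0 := by positivity
      have hgu : γ * u = r * (1 + c * u) := by
        rw [hu]; field_simp; ring
      field_simp
      linear_combination (1 - u) * hgu
  · set u := Real.sqrt (r / (γ - r * c)) with hu
    have hup : 0 < u := Real.sqrt_pos.mpr hpos
    have hsq : u ^ 2 = r / (γ - r * c) := Real.sq_sqrt hpos.le
    have hu1 : u < 1 := by nlinarith [hsq, hlt]
    have hden : (0:ℝ) < 1 + c * u ^ 2 := by positivity
    have hvp : 0 < (1 - u) * (1 + c * u ^ 2) / u := by
      apply div_pos _ hup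
      nlinarith
    refine ⟨u, (1 - u) * (1 + c * u ^ 2) / u, hup, hvp, ?_, ?_⟩
    · field_simp
      ring
    · have hgu : γ * u ^ 2 = r * (1 + c * u ^ 2) := by
        rw [hsq]; field_simp; ring
      field_simp
      linear_combination (1 - u) * hgu

/-- Existence, uniqueness and form of the positive fixed point of the
phytoplankton-zooplankton map. -/
theorem stmt_3 (r c γ : ℝ) (h : ℕ) (hr : 0 < r) (hc : 0 < c) (hh : h = 1 ∨ h = 2) :
    ((∃ u v : ℝ, 0 < u ∧ 0 < v ∧
        u * (2 - u) - u ^ h * v / (1 + c * u ^ h) = u ∧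
        γ * u ^ h * v / (1 + c * u ^ h) + (1 - r) * v = v)
      ↔ γ > r * (1 + c)) ∧
    (∀ u v : ℝ, 0 < u → 0 < v →
        u * (2 - u) - u ^ h * v / (1 + c * u ^ h) = u →
        γ * u ^ h * v / (1 + c * u ^ h) + (1 - r) * v = v →
        u ^ h = r / (γ - r * c) ∧ v = (1 - u) * (1 + c * u ^ h) / u ^ (h - 1)) := by
  constructor
  · constructor
    · rintro ⟨u, v, hu, hv, e1, e2⟩
      exact (pz_unique r c γ h hr hc hh u v hu hv e1 e2).1
    · exact pz_exists r c γ h hr hc hh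
  · intro u v hu hv e1 e2
    exact (pz_unique r c γ h hr hc hh u v hu hv e1 e2).2
end

section
/- Let h ∈ {1,2}, c ≥ -1-γ with γ ≤ -1, and 0 < r ≤ (c+1+γ)/(c+1). Then for all u ∈ [0,1] and v ≥ 0, the expression γuʰv/(1+cuʰ) + (1-r)v is nonnegative. -/
/-- Nonnegativity of the zooplankton update under condition (a):
γ ≤ -1, c ≥ -1-γ, 0 < r ≤ (c+1+γ)/(c+1). -/
theorem stmt_8 (r c γ : ℝ) (h : ℕ) (hh : h = 1 ∨ h = 2)
    (hγ : γ ≤ -1) (hc : c ≥ -1 - γ) (hr0 : 0 < r) (hr1 : r ≤ (c + 1 + γ) / (c + 1)) :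
    ∀ u v : ℝ, u ∈ Set.Icc (0 : ℝ) 1 → 0 ≤ v →
      0 ≤ γ * u ^ h * v / (1 + c * u ^ h) + (1 - r) * v := by
  intro u v hu hv
  obtain ⟨hu0, hu1⟩ := hu
  have hc0 : 0 ≤ c := by linarith
  have hcp : 0 < c + 1 := by linarith
  have hr : r * (c + 1) ≤ c + 1 + γ := by
    rw [← le_div_iff₀ hcp]; exact hr1
  have ht0 : 0 ≤ u ^ h := pow_nonneg hu0 h
  have ht1 : u ^ h ≤ 1 := pow_le_one₀ hu0 hu1
  have hd : 0 < 1 + c * u ^ h := by nlinarith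
  have key : γ * u ^ h * v / (1 + c * u ^ h) + (1 - r) * v
      = v * (γ * u ^ h + (1 - r) * (1 + c * u ^ h)) / (1 + c * u ^ h) := by
    field_simp
  rw [key]
  apply div_nonneg _ hd.le
  have hr1' : r ≤ 1 := by nlinarith
  have hnum : 0 ≤ γ * u ^ h + (1 - r) * (1 + c * u ^ h) := by
    nlinarith [mul_nonneg (sub_nonneg.2 ht1) (sub_nonneg.2 hr1'),
      mul_nonneg ht0 (sub_nonneg.2 hr)]
  exact mul_nonneg hv hnum
end

section
/- Let c ≤ 1/2, r > 0, and suppose γ ≤ r(1+c) and γuv/(1+cu) + (1-r)v ≥ 0 for all (u,v) with 0 ≤ u ≤ 1, 0 ≤ v. Then the set M₁ = {(u,v) : 0 ≤ u ≤ 1, 0 ≤ v ≤ (2-u)(1+cu)} is invariant under the map T(u,v) = (u(2-u) - uv/(1+cu), γuv/(1+cu) + (1-r)v). -/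
/-- Invariance of M₁ = {(u,v) : 0 ≤ u ≤ 1, 0 ≤ v ≤ (2-u)(1+cu)} under the
Holling type II map when c ≤ 1/2, γ ≤ r(1+c) and the second component is
nonnegative on the domain. -/
theorem stmt_9 (r c γ : ℝ) (hc0 : 0 < c) (hc : c ≤ 1 / 2) (hr : 0 < r)
    (hγ : γ ≤ r * (1 + c))
    (hnn : ∀ u v : ℝ, 0 ≤ u → u ≤ 1 → 0 ≤ v →
      0 ≤ γ * u * v / (1 + c * u) + (1 - r) * v) :
    ∀ u v : ℝ, 0 ≤ u → u ≤ 1 → 0 ≤ v → v ≤ (2 - u) * (1 + c * u) →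
      0 ≤ u * (2 - u) - u * v / (1 + c * u) ∧
      u * (2 - u) - u * v / (1 + c * u) ≤ 1 ∧
      0 ≤ γ * u * v / (1 + c * u) + (1 - r) * v ∧
      γ * u * v / (1 + c * u) + (1 - r) * v ≤
        (2 - (u * (2 - u) - u * v / (1 + c * u))) *
          (1 + c * (u * (2 - u) - u * v / (1 + c * u))) := by
  intro u v hu hu1 hv hvmax
  have hD : (0:ℝ) < 1 + c * u := by nlinarith
  have huv : 0 ≤ u * v := mul_nonneg hu hv
  refine ⟨?_, ?_, hnn u v hu hu1 hv, ?_⟩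
  · rw [sub_nonneg, div_le_iff₀ hD]
    nlinarith
  · have h0 : 0 ≤ u * v / (1 + c * u) := div_nonneg huv hD.le
    nlinarith [sq_nonneg (1 - u)]
  · -- First: the new v-value is at most v
    have hstep : γ * u * v / (1 + c * u) + (1 - r) * v ≤ v := by
      have h1 : γ * u * v / (1 + c * u) ≤ r * v := by
        rw [div_le_iff₀ hD]
        nlinarith [mul_le_mul_of_nonneg_right hγ huv,
          mul_nonneg (mul_nonneg hr.le hv) (sub_nonneg.mpr hu1)]
      linarith
    refine hstep.trans ?_
    -- Now show v ≤ (2-u')(1+cu')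
    set m := (2 - u) * (1 + c * u) with hm
    have hmpos : (0:ℝ) < m := by nlinarith
    set l := v / m with hl
    have hl0 : 0 ≤ l := div_nonneg hv hmpos.le
    have hl1 : l ≤ 1 := (div_le_one hmpos).mpr hvmax
    have hveq : v = l * m := by rw [hl, div_mul_cancel₀ v hmpos.ne']
    have hx : u * v / (1 + c * u) = l * (u * (2 - u)) := by
      rw [hveq, hm]
      field_simp
    rw [hx, hveq]
    have hA0 : 0 ≤ u * (2 - u) := mul_nonneg hu (by linarith)
    have hA1 : u * (2 - u) ≤ 1 := by nlinarith [sq_nonneg (1 - u)]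
    have hH0 : (0:ℝ) ≤ (2 - u * (2 - u)) * (1 + c * (u * (2 - u))) := by
      nlinarith [mul_nonneg hc0.le hA0, mul_le_mul_of_nonneg_left hA1 (mul_nonneg hc0.le hA0)]
    have hH1 : (0:ℝ) ≤ 2 - m := by
      have := mul_nonneg hu (by linarith : (0:ℝ) ≤ 1 - 2 * c)
      have := mul_nonneg hc0.le (sq_nonneg u)
      rw [hm]; nlinarith
    nlinarith [mul_nonneg (sub_nonneg.mpr hl1) hH0, mul_nonneg hl0 hH1,
      mul_nonneg (mul_nonneg (mul_nonneg hc0.le (sq_nonneg (u * (2 - u)))) hl0)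
        (sub_nonneg.mpr hl1)]
end

section
/- Let c ≥ 1, r > 0, γ ≤ r(1+c), and suppose the second component of T is nonnegative on the relevant domain. Then the rectangle M₂ = {(u,v) : 0 ≤ u ≤ 1, 0 ≤ v ≤ 2} is invariant under T(u,v) = (u(2-u) - uv/(1+cu), γuv/(1+cu) + (1-r)v). -/
/-- Invariance of the rectangle M₂ = [0,1] × [0,2] under the Holling type II map
when c ≥ 1, γ ≤ r(1+c) and the second component is nonnegative on the domain. -/
theorem stmt_10 (r c γ : ℝ) (hc : 1 ≤ c) (hr : 0 < r) (hγ : γ ≤ r * (1 + c))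
    (hnn : ∀ u v : ℝ, 0 ≤ u → u ≤ 1 → 0 ≤ v → v ≤ 2 →
      0 ≤ γ * u * v / (1 + c * u) + (1 - r) * v) :
    ∀ u v : ℝ, 0 ≤ u → u ≤ 1 → 0 ≤ v → v ≤ 2 →
      0 ≤ u * (2 - u) - u * v / (1 + c * u) ∧
      u * (2 - u) - u * v / (1 + c * u) ≤ 1 ∧
      0 ≤ γ * u * v / (1 + c * u) + (1 - r) * v ∧
      γ * u * v / (1 + c * u) + (1 - r) * v ≤ 2 := by
  intro u v hu0 hu1 hv0 hv2
  have hd : (0:ℝ) < 1 + c * u := by nlinarith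
  refine ⟨?_, ?_, hnn u v hu0 hu1 hv0 hv2, ?_⟩
  · have h1 : u * v / (1 + c * u) ≤ u * (2 - u) := by
      rw [div_le_iff₀ hd]
      nlinarith [mul_nonneg hu0 (mul_nonneg hu0 (sub_nonneg.mpr hu1)),
        mul_nonneg (mul_nonneg (sub_nonneg.mpr hc) hu0) (mul_nonneg hu0 (by linarith : (0:ℝ) ≤ 2 - u)),
        mul_nonneg hu0 (sub_nonneg.mpr hv2)]
    linarith
  · have h2 : 0 ≤ u * v / (1 + c * u) := by positivity
    nlinarith
  · have h3 : γ * u * v / (1 + c * u) ≤ r * v := by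
      rw [div_le_iff₀ hd]
      nlinarith [mul_nonneg hu0 hv0, mul_nonneg (mul_nonneg hu0 hv0) (sub_nonneg.mpr hγ),
        mul_nonneg (mul_nonneg hr.le hv0) (sub_nonneg.mpr hu1)]
    nlinarith
end

section
/- For h = 1, the equation (1-ū)(1+rc+2cū)/(1+cū) = 1 with ū = r/(γ-rc), viewed as an equation in γ with parameters r, c > 0, has the solution γ₀ = (1 - c + r + 2rc + √((1-c)² + 2r + 6rc + r²))/2, and (1-c)² + 2r + 6rc + r² > 0 so γ₀ is real. -/
/-- For h = 1, the bifurcation equation q(ū) = (1-ū)(1+r+2cū)/(1+cū) = 1 with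
ū = r/(γ-rc) is solved by γ₀ = (1-c+r+2rc+√((1-c)²+2r+6rc+r²))/2, and the
discriminant (1-c)²+2r+6rc+r² is positive. -/
theorem stmt_15 (r c : ℝ) (hr : 0 < r) (hc : 0 < c) :
    0 < (1 - c) ^ 2 + 2 * r + 6 * r * c + r ^ 2 ∧
    (let γ₀ := (1 - c + r + 2 * r * c +
        Real.sqrt ((1 - c) ^ 2 + 2 * r + 6 * r * c + r ^ 2)) / 2
     let u := r / (γ₀ - r * c)
     (1 - u) * (1 + r + 2 * c * u) / (1 + c * u) = 1) := by
  have hD : 0 < (1 - c) ^ 2 + 2 * r + 6 * r * c + r ^ 2 := by positivity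
  refine ⟨hD, ?_⟩
  set s := Real.sqrt ((1 - c) ^ 2 + 2 * r + 6 * r * c + r ^ 2) with hsdef
  have hs2 : s ^ 2 = (1 - c) ^ 2 + 2 * r + 6 * r * c + r ^ 2 :=
    Real.sq_sqrt hD.le
  have hs0 : 0 ≤ s := Real.sqrt_nonneg _
  have hkey : 0 < 1 - c + r + s := by nlinarith [sq_nonneg (s - (1 - c + r)), sq_nonneg (s + (1 - c + r))]
  intro γ₀ u
  have hden : γ₀ - r * c = (1 - c + r + s) / 2 := by simp only [γ₀]; ring
  have hden0 : γ₀ - r * c ≠ 0 := by rw [hden]; positivity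
  have hu : u = 2 * r / (1 - c + r + s) := by
    simp only [u, hden]
    rw [div_div_eq_mul_div]; ring_nf
  have hu0 : 0 < u := by rw [hu]; positivity
  have h1cu : 1 + c * u ≠ 0 := by positivity
  rw [hu] at *
  rw [div_eq_one_iff_eq h1cu]
  field_simp
  linear_combination r * hs2
end

section
/- Suppose γ > r(1+c), r, c > 0, h ∈ {1,2}, 0 < ū < 1 with ūʰ = r/(γ-rc), and q(ū) = 1 where q(ū) = (1-ū)(2-h+rh+2cūʰ)/(1+cūʰ). Then p(ū) = 1 + (1-ū)(2-h+2cūʰ)/(1+cūʰ) satisfies 1 < p(ū) < 2, and consequently the eigenvalues λ_{1,2} = (p(ū) ± i√(4 - p(ū)²))/2 of the Jacobian at the positive fixed point are non-real complex conjugates of modulus 1 satisfying λᵐ ≠ 1 for m = 1, 2, 3, 4. -/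
/-- Non-degeneracy at the Neimark–Sacker bifurcation: if q(ū) = 1 then
1 < p(ū) < 2 and the eigenvalues (p ± i√(4-p²))/2 are non-real complex
conjugates of modulus 1 with λᵐ ≠ 1 for m = 1,2,3,4. -/
theorem stmt_17 (r c γ u : ℝ) (h : ℕ) (hr : 0 < r) (hc : 0 < c)
    (hh : h = 1 ∨ h = 2) (hγ : γ > r * (1 + c))
    (hu : u ^ h = r / (γ - r * c)) (hu0 : 0 < u) (hu1 : u < 1)
    (hq : (1 - u) * (2 - h + r * h + 2 * c * u ^ h) / (1 + c * u ^ h) = 1) :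
    let p : ℝ := 1 + (1 - u) * (2 - h + 2 * c * u ^ h) / (1 + c * u ^ h)
    let l1 : ℂ := (p + Complex.I * Real.sqrt (4 - p ^ 2)) / 2
    let l2 : ℂ := (p - Complex.I * Real.sqrt (4 - p ^ 2)) / 2
    1 < p ∧ p < 2 ∧ l2 = (starRingEnd ℂ) l1 ∧ l1.im ≠ 0 ∧
      ‖l1‖ = 1 ∧ ‖l2‖ = 1 ∧
      (∀ m : ℕ, 1 ≤ m → m ≤ 4 → l1 ^ m ≠ 1 ∧ l2 ^ m ≠ 1) := by
  intro p l1 l2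
  have hA : 0 < c * u ^ h := mul_pos hc (pow_pos hu0 h)
  have hD : 0 < 1 + c * u ^ h := by linarith
  have hN : (1 - u) * (2 - h + r * h + 2 * c * u ^ h) = 1 + c * u ^ h := by
    field_simp at hq; linarith
  have hp2 : p < 2 := by
    have he : (1 - u) * (2 - h + 2 * c * u ^ h)
        = 1 + c * u ^ h - (1 - u) * (r * h) := by nlinarith [hN]
    have hhpos : (0:ℝ) < (h:ℝ) := by rcases hh with rfl | rfl <;> norm_num
    have hpos : 0 < (1 - u) * (r * h) := by
      apply mul_pos (by linarith) (by positivity)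
    have : (1 + c * u ^ h - (1 - u) * (r * h)) / (1 + c * u ^ h) < 1 := by
      rw [div_lt_one hD]; linarith
    simp only [p]; rw [he]; linarith
  have hp1 : 1 < p := by
    have hnum : 0 < (1 - u) * (2 - h + 2 * c * u ^ h) := by
      apply mul_pos (by linarith)
      rcases hh with rfl | rfl <;> push_cast <;> nlinarith
    have : 0 < (1 - u) * (2 - h + 2 * c * u ^ h) / (1 + c * u ^ h) :=
      div_pos hnum hD
    simp only [p]; linarith
  -- square root facts
  have hs2 : Real.sqrt (4 - p ^ 2) ^ 2 = 4 - p ^ 2 := Real.sq_sqrt (by nlinarith)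
  have hs0 : 0 < Real.sqrt (4 - p ^ 2) := Real.sqrt_pos.mpr (by nlinarith)
  have hre1 : l1.re = p / 2 := by
    simp only [l1]
    simp [Complex.div_re]
  have him1 : l1.im = Real.sqrt (4 - p ^ 2) / 2 := by
    simp only [l1]
    simp [Complex.div_im]
  have hconj : l2 = (starRingEnd ℂ) l1 := by
    simp only [l1, l2, map_div₀, map_add, map_mul, Complex.conj_I,
      Complex.conj_ofReal, map_ofNat]
    ring
  have himne : l1.im ≠ 0 := by rw [him1]; positivity
  have habs1 : ‖l1‖ = 1 := by
    have h2 : ‖l1‖ ^ 2 = 1 := by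
      rw [Complex.sq_norm, Complex.normSq_apply, hre1, him1]
      linear_combination hs2 / 4
    nlinarith [norm_nonneg l1, h2]
  have habs2 : ‖l2‖ = 1 := by rw [hconj, Complex.norm_conj, habs1]
  -- key quadratic relation
  have hs2' : ((Real.sqrt (4 - p ^ 2) : ℝ) : ℂ) ^ 2 = 4 - (p:ℂ) ^ 2 := by
    rw [← Complex.ofReal_pow, hs2]; push_cast; ring
  have hkey : l1 ^ 2 = (p : ℂ) * l1 - 1 := by
    simp only [l1]
    linear_combination (((Real.sqrt (4 - p ^ 2) : ℝ) : ℂ) ^ 2 / 4) * Complex.I_sq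
      - hs2' / 4
  have him2 : (l1 ^ 2).im = p * (Real.sqrt (4 - p ^ 2) / 2) := by
    rw [hkey]; simp [him1]
  have him2ne : (l1 ^ 2).im ≠ 0 := by
    rw [him2]; positivity
  have hcube : l1 ^ 3 = ((p ^ 2 - 1 : ℝ) : ℂ) * l1 - ((p : ℝ) : ℂ) := by
    push_cast
    linear_combination (l1 + (p:ℂ)) * hkey
  have him3ne : (l1 ^ 3).im ≠ 0 := by
    rw [hcube]
    simp only [Complex.sub_im, Complex.mul_im, Complex.ofReal_im,
      Complex.ofReal_re, zero_mul, add_zero, sub_zero]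
    rw [him1]
    have : (0:ℝ) < (p ^ 2 - 1) * (Real.sqrt (4 - p ^ 2) / 2) := by
      apply mul_pos (by nlinarith) (by positivity)
    linarith
  have hl1pow : ∀ m : ℕ, l1 ^ m ≠ 1 → l2 ^ m ≠ 1 := by
    intro m hm hcon
    apply hm
    have h1 : (starRingEnd ℂ) (l1 ^ m) = 1 := by
      rw [map_pow, ← hconj, hcon]
    have h2 := congrArg (starRingEnd ℂ) h1
    simpa using h2
  refine ⟨hp1, hp2, hconj, himne, habs1, habs2, ?_⟩
  intro m h1 h4
  have key : l1 ^ m ≠ 1 := by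
    interval_cases m
    · intro e; apply himne; rw [pow_one] at e; rw [e]; simp
    · intro e; apply him2ne; rw [e]; simp
    · intro e; apply him3ne; rw [e]; simp
    · intro e
      have hz : (l1 ^ 2 - 1) * (l1 ^ 2 + 1) = 0 := by linear_combination e
      rcases mul_eq_zero.mp hz with h' | h'
      · apply him2ne
        have : l1 ^ 2 = 1 := by linear_combination h'
        rw [this]; simp
      · apply him2ne
        have : l1 ^ 2 = -1 := by linear_combination h'
        rw [this]; simp
  exact ⟨key, hl1pow m key⟩
end
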